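/- For R ∈ Θ (i.e., R ∈ Θ_k for some k ∈ ℕ) and any word e ∈ E*, either both successors of e lie in the component set {R}, or neither does; that is, Succ(e) ∩ {R} = ∅ or Succ(e) ∩ {R} = Succ(e). -/

import Mathlib

/-- Words over the two-letter alphabet `E = {-,+}`, encoded as lists of booleans
(`false` for `-`, `true` for `+`); the empty list is the empty word `o`. -/
abbrev Word := List Bool

/-- The two successors of a word `e`: `e-` and `e+`. -/
def Succ (e : Word) : Set Word := {e ++ [false], e ++ [true]}

/-- `IsTheta k R` says that `(R 0, ..., R (2k))` is an element of `Θ_k`: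
the components are pairwise distinct words, `R 0` is the empty word, and for
every `l ∈ {1,...,k}` there is `j ≤ 2l-2` with
`(R (2l-1), R (2l)) = (R j ++ [-], R j ++ [+])`. -/
def IsTheta (k : ℕ) (R : ℕ → Word) : Prop :=
  R 0 = [] ∧ Set.InjOn R (Set.Iic (2 * k)) ∧
    ∀ l, 1 ≤ l → l ≤ k → ∃ j ≤ 2 * l - 2,
      R (2 * l - 1) = R j ++ [false] ∧ R (2 * l) = R j ++ [true]

/-- The set `{R}` of components of the tuple `(R 0, ..., R (2k))`. -/
def comps (k : ℕ) (R : ℕ → Word) : Set Word := R '' Set.Iic (2 * k)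

/-- The set of leaves `L(R)`: components of `R` none of whose successors is a
component of `R`. -/
def leaves (k : ℕ) (R : ℕ → Word) : Set Word :=
  {r ∈ comps k R | Succ r ∩ comps k R = ∅}

theorem dropLast_of_mem_succ {e x : Word} (hx : x ∈ Succ e) : x.dropLast = e := by
  rcases hx with rfl | rfl <;> exact List.dropLast_concat

theorem ne_nil_of_mem_succ {e x : Word} (hx : x ∈ Succ e) : x ≠ [] := by
  rcases hx with rfl | rfl <;> simp

/-- The component `R i` belongs to the pair `(R (2l-1), R (2l))` with `l = (i + 1) / 2`. -/
theorem IsTheta.exists_succ_subset_comps {k : ℕ} {R : ℕ → Word} (hR : IsTheta k R) {i : ℕ}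
    (hi : i ≤ 2 * k) (hi0 : i ≠ 0) : ∃ e, R i ∈ Succ e ∧ Succ e ⊆ comps k R := by
  obtain ⟨j, -, hminus, hplus⟩ := hR.2.2 ((i + 1) / 2) (by omega) (by omega)
  refine ⟨R j, ?_, ?_⟩
  · rcases Nat.even_or_odd i with ⟨m, rfl⟩ | ⟨m, rfl⟩
    · right; rw [← hplus]; congr 1; omega
    · left; rw [← hminus]; congr 1; omega
  · rintro x (rfl | rfl)
    · exact ⟨2 * ((i + 1) / 2) - 1, Set.mem_Iic.mpr (by omega), hminus⟩
    · exact ⟨2 * ((i + 1) / 2), Set.mem_Iic.mpr (by omega), hplus⟩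

/-- For `R ∈ Θ_k` and any word `e`, either both successors of `e` are components
of `R` or neither is. -/
theorem succ_inter_comps (k : ℕ) (R : ℕ → Word) (hR : IsTheta k R) (e : Word) :
    Succ e ∩ comps k R = ∅ ∨ Succ e ∩ comps k R = Succ e := by
  rcases (Succ e ∩ comps k R).eq_empty_or_nonempty with h | ⟨x, hxe, i, hi, rfl⟩
  · exact Or.inl h
  have hi0 : i ≠ 0 := by
    rintro rfl
    exact ne_nil_of_mem_succ hxe hR.1
  obtain ⟨e', hie', hsub⟩ := hR.exists_succ_subset_comps hi hi0
  obtain rfl : e' = e := (dropLast_of_mem_succ hie').symm.trans (dropLast_of_mem_succ hxe)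
  exact Or.inr (Set.inter_eq_left.mpr hsub)
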